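/- Let 𝒞 be a Z2Z4-additive code and C = Φ(𝒞). Then 𝒦(𝒞) := {u ∈ 𝒞 : 2(u*v) ∈ 𝒞 for all v ∈ 𝒞} is an additive subgroup of Z2^α × Z4^β with Φ(𝒦(𝒞)) = K(C); in particular K(C) is a Z2Z4-linear code. -/

import Mathlib

/-- The ambient group `Z2^α × Z4^β`, with componentwise ring structure
(so `u * v` is the componentwise product). -/
abbrev Amb (α β : ℕ) := (Fin α → ZMod 2) × (Fin β → ZMod 4)

/-- The binary space `Z2^α × (Z2²)^β ≅ Z2^(α+2β)`. -/
abbrev Bin (α β : ℕ) := (Fin α → ZMod 2) × (Fin β → ZMod 2 × ZMod 2)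

/-- The Gray map `φ : Z4 → Z2²` with `φ(0)=(0,0), φ(1)=(0,1), φ(2)=(1,1), φ(3)=(1,0)`. -/
def grayPair (y : ZMod 4) : ZMod 2 × ZMod 2 :=
  match y.val with
  | 0 => (0, 0)
  | 1 => (0, 1)
  | 2 => (1, 1)
  | _ => (1, 0)

/-- The extended Gray map `Φ : Z2^α × Z4^β → Z2^(α+2β)`. -/
def Phi {α β : ℕ} (u : Amb α β) : Bin α β :=
  (u.1, fun i => grayPair (u.2 i))

/-- The kernel `K(C) = {x | x + C = C}` of a binary code. -/
def kernelK {α β : ℕ} (C : Set (Bin α β)) : Set (Bin α β) :=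
  {x | (fun y => x + y) '' C = C}

/-- The rank of a binary code: the `Z2`-dimension of its linear span. -/
noncomputable def rankOf {α β : ℕ} (C : Set (Bin α β)) : ℕ :=
  Module.finrank (ZMod 2) (Submodule.span (ZMod 2) C)

/-- The dimension of the kernel of a binary code. -/
noncomputable def kerDim {α β : ℕ} (C : Set (Bin α β)) : ℕ :=
  Module.finrank (ZMod 2) (Submodule.span (ZMod 2) (kernelK C))

/-- A `Z2Z4`-additive code `C ⊆ Z2^α × Z4^β` is of type `(α,β;γ,δ;κ)`:
`|C| = 2^(γ+2δ)`, the number of elements `x` with `2x = 0` is `2^(γ+δ)`, and `κ` is the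
`Z2`-dimension of the projection onto the first `α` coordinates of `{x ∈ C | 2x = 0}`. -/
def IsTypeOf (α β γ δ κ : ℕ) (C : AddSubgroup (Amb α β)) : Prop :=
  Nat.card C = 2 ^ (γ + 2 * δ) ∧
  Nat.card {x : Amb α β | x ∈ C ∧ 2 • x = 0} = 2 ^ (γ + δ) ∧
  Module.finrank (ZMod 2)
    (Submodule.span (ZMod 2) (Prod.fst '' {x : Amb α β | x ∈ C ∧ 2 • x = 0})) = κ

/-!
The Gray map satisfies `Φ(u) + Φ(v) = Φ(u + v + 2(u*v))` (a finite check on `Z4`), and `Φ` is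
injective with `Φ(0) = 0`. Since every binary vector is its own negative, `x ∈ K(C)` just says
`x + C ⊆ C`; taking `0 ∈ C` forces `x = Φ(u)` with `u ∈ 𝒞`, and then `Φ(u) + Φ(𝒞) ⊆ Φ(𝒞)` holds
exactly when `2(u*v) ∈ 𝒞` for every `v ∈ 𝒞`.
-/

lemma grayPair_add (y z : ZMod 4) :
    grayPair y + grayPair z = grayPair (y + z + 2 * (y * z)) := by
  revert y z
  decide

lemma grayPair_injective : Function.Injective grayPair := by
  decide

section Gray

variable {α β : ℕ}

lemma Phi_zero : Phi (0 : Amb α β) = 0 :=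
  Prod.ext rfl (funext fun _ => rfl)

lemma Phi_injective : Function.Injective (Phi (α := α) (β := β)) := by
  intro u v h
  obtain ⟨h₁, h₂⟩ := Prod.ext_iff.mp h
  exact Prod.ext h₁ (funext fun i => grayPair_injective (congrFun h₂ i))

lemma Phi_add (u v : Amb α β) : Phi u + Phi v = Phi (u + v + 2 * (u * v)) := by
  have two_eq_zero : (2 : Fin α → ZMod 2) = 0 := funext fun _ => rfl
  refine Prod.ext ?_ (funext fun i => grayPair_add (u.2 i) (v.2 i))
  simp [Phi, two_eq_zero]

lemma mem_kernelK_iff {S : Set (Bin α β)} {x : Bin α β} :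
    x ∈ kernelK S ↔ ∀ c ∈ S, x + c ∈ S := by
  refine ⟨fun h c hc => h ▸ Set.mem_image_of_mem _ hc, fun h => ?_⟩
  refine (Set.image_subset_iff.2 h).antisymm fun c hc => ⟨x + c, h c hc, ?_⟩
  simp [← add_assoc, ZModModule.add_self]

end Gray

section AdditiveKernel

variable {α β : ℕ} (C : AddSubgroup (Amb α β))

def additiveKernel : AddSubgroup (Amb α β) where
  carrier := {u | u ∈ C ∧ ∀ v ∈ C, 2 * (u * v) ∈ C}
  zero_mem' := ⟨C.zero_mem, fun v _ => by simp⟩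
  add_mem' := by
    rintro u w ⟨hu, hu2⟩ ⟨hw, hw2⟩
    refine ⟨C.add_mem hu hw, fun v hv => ?_⟩
    rw [add_mul, mul_add]
    exact C.add_mem (hu2 v hv) (hw2 v hv)
  neg_mem' := by
    rintro u ⟨hu, hu2⟩
    refine ⟨C.neg_mem hu, fun v hv => ?_⟩
    rw [neg_mul, mul_neg]
    exact C.neg_mem (hu2 v hv)

lemma Phi_additiveKernel_subset_kernelK :
    Phi '' (additiveKernel C : Set (Amb α β)) ⊆ kernelK (Phi '' (C : Set (Amb α β))) := by
  rintro _ ⟨u, ⟨hu, hu2⟩, rfl⟩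
  refine mem_kernelK_iff.2 ?_
  rintro _ ⟨w, hw, rfl⟩
  rw [Phi_add]
  exact Set.mem_image_of_mem _ (C.add_mem (C.add_mem hu hw) (hu2 w hw))

lemma kernelK_subset_Phi_additiveKernel :
    kernelK (Phi '' (C : Set (Amb α β))) ⊆ Phi '' (additiveKernel C : Set (Amb α β)) := by
  intro x hx
  rw [mem_kernelK_iff] at hx
  obtain ⟨u, hu, rfl⟩ : x ∈ Phi '' (C : Set (Amb α β)) := by
    simpa using hx 0 ⟨0, C.zero_mem, Phi_zero⟩
  refine ⟨u, ⟨hu, fun v hv => ?_⟩, rfl⟩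
  obtain ⟨w, hw, hPhi⟩ := hx (Phi v) ⟨v, hv, rfl⟩
  have hw_eq : w = u + v + 2 * (u * v) := Phi_injective (hPhi.trans (Phi_add u v))
  have : 2 * (u * v) = w - u - v := by rw [hw_eq]; abel
  exact this ▸ C.sub_mem (C.sub_mem hw hu) hv

end AdditiveKernel

/-- `𝒦(𝒞) = {u ∈ 𝒞 : ∀ v ∈ 𝒞, 2(u*v) ∈ 𝒞}` is an additive subgroup with
`Φ(𝒦(𝒞)) = K(C)`; in particular `K(C)` is a `Z2Z4`-linear code. -/
theorem kernel_is_additive (α β : ℕ) (C : AddSubgroup (Amb α β)) :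
    (∃ H : AddSubgroup (Amb α β),
        (H : Set (Amb α β)) = {u : Amb α β | u ∈ C ∧ ∀ v ∈ C, 2 * (u * v) ∈ C}) ∧
      Phi '' {u : Amb α β | u ∈ C ∧ ∀ v ∈ C, 2 * (u * v) ∈ C} =
        kernelK (Phi '' (C : Set (Amb α β))) :=
  ⟨⟨additiveKernel C, rfl⟩,
    (Phi_additiveKernel_subset_kernelK C).antisymm (kernelK_subset_Phi_additiveKernel C)⟩
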